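/- Transitions are stable under renaming: if E : P ⟶a Q is a transition from a process P in Proc Γ and ρ : Fin Γ → Fin Δ is a renaming, then there is a transition E/ρ : ρ* P ⟶(ρ* a) (ρ/a)* Q, where the residual renaming ρ/a is suc ρ if a is a bound action (input x or bound output x⟨ν⟩) and ρ if a is a non-bound action (output x⟨y⟩ or τ). -/

import Mathlib

/-!
By induction on the derivation, renaming each premise with `ρ`, or with `suc ρ` under a binder.
The only work is in the rules whose target applies `push`, `pop y` or `swap`: these commute with
the renaming once it is lifted, `suc ρ ∘ push = push ∘ ρ`, `pop (ρ y) ∘ suc ρ = ρ ∘ pop y` and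
`swap ∘ suc (suc ρ) = suc (suc ρ) ∘ swap`, so the renamed rule instance has the required target.
-/

/-- Contexts are natural numbers; names in context `Γ` are de Bruijn indices below `Γ`. -/
abbrev Name (Γ : ℕ) : Type := Fin Γ

/-- The renaming `push : Fin Γ → Fin (Γ+1)` sends `x` to `x+1`, freeing the index `0`. -/
def push {Γ : ℕ} (x : Name Γ) : Name (Γ + 1) := x.succ

/-- For `y : Fin Γ`, the renaming `pop y : Fin (Γ+1) → Fin Γ` sends `0` to `y` and `x+1` to `x`. -/
def pop {Γ : ℕ} (y : Name Γ) : Name (Γ + 1) → Name Γ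
  | ⟨0, _⟩ => y
  | ⟨x + 1, h⟩ => ⟨x, Nat.lt_of_succ_lt_succ h⟩

/-- The renaming `swap : Fin (Γ+2) → Fin (Γ+2)` sends `0` to `1`, `1` to `0` and `x+2` to itself. -/
def swap {Γ : ℕ} : Name (Γ + 2) → Name (Γ + 2)
  | ⟨0, _⟩ => ⟨1, by omega⟩
  | ⟨1, _⟩ => ⟨0, by omega⟩
  | ⟨x + 2, h⟩ => ⟨x + 2, h⟩

/-- The lift `suc ρ : Fin (Γ+1) → Fin (Δ+1)` of a renaming `ρ : Fin Γ → Fin Δ` sends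
`0` to `0` and `x+1` to `(ρ x)+1`. -/
def sucR {Γ Δ : ℕ} (ρ : Name Γ → Name Δ) : Name (Γ + 1) → Name (Δ + 1)
  | ⟨0, _⟩ => ⟨0, Nat.succ_pos Δ⟩
  | ⟨x + 1, h⟩ => (ρ ⟨x, Nat.lt_of_succ_lt_succ h⟩).succ

/-- Processes over the context `Γ`, in de Bruijn form. -/
inductive Proc : ℕ → Type where
  /-- The inactive process `0`. -/
  | nil : {Γ : ℕ} → Proc Γ
  /-- Input prefix `x.P` (binding one name). -/
  | input : {Γ : ℕ} → Name Γ → Proc (Γ + 1) → Proc Γ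
  /-- Output prefix `x⟨y⟩.P`. -/
  | output : {Γ : ℕ} → Name Γ → Name Γ → Proc Γ → Proc Γ
  /-- Choice `P + Q`. -/
  | choice : {Γ : ℕ} → Proc Γ → Proc Γ → Proc Γ
  /-- Parallel composition `P ∣ Q`. -/
  | par : {Γ : ℕ} → Proc Γ → Proc Γ → Proc Γ
  /-- Restriction `ν P` (binding one name). -/
  | nu : {Γ : ℕ} → Proc (Γ + 1) → Proc Γ
  /-- Replication `!P`. -/
  | rep : {Γ : ℕ} → Proc Γ → Proc Γ

/-- The functorial extension of a renaming to processes, going under the binders of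
input and restriction via the lift `sucR`. -/
def Proc.rename : {Γ Δ : ℕ} → (Name Γ → Name Δ) → Proc Γ → Proc Δ
  | _, _, _, .nil => .nil
  | _, _, ρ, .input x P => .input (ρ x) (P.rename (sucR ρ))
  | _, _, ρ, .output x y P => .output (ρ x) (ρ y) (P.rename ρ)
  | _, _, ρ, .choice P Q => .choice (P.rename ρ) (Q.rename ρ)
  | _, _, ρ, .par P Q => .par (P.rename ρ) (Q.rename ρ)
  | _, _, ρ, .nu P => .nu (P.rename (sucR ρ))
  | _, _, ρ, .rep P => .rep (P.rename ρ)
/-- Actions are either *bound* (input and bound output, whose target context gains a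
fresh name) or *non-bound* (output and silent, whose target context is unchanged). -/
inductive ActTy : Type where
  | bound : ActTy
  | nonbound : ActTy

/-- The target context of an action of the given kind performed in context `Γ`. -/
def ActTy.tgt : ActTy → ℕ → ℕ
  | .bound, Γ => Γ + 1
  | .nonbound, Γ => Γ

/-- Actions over the context `Γ`. -/
inductive Act : ActTy → ℕ → Type where
  /-- Input `x`. -/
  | inp : {Γ : ℕ} → Name Γ → Act .bound Γ
  /-- Bound output `x⟨ν⟩` (output of a name whose scope is being extruded). -/
  | bout : {Γ : ℕ} → Name Γ → Act .bound Γ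
  /-- Output `x⟨y⟩`. -/
  | out : {Γ : ℕ} → Name Γ → Name Γ → Act .nonbound Γ
  /-- Silent action `τ`. -/
  | tau : {Γ : ℕ} → Act .nonbound Γ

/-- The extension of a renaming to actions. -/
def Act.rename {Γ Δ : ℕ} (ρ : Name Γ → Name Δ) : {ty : ActTy} → Act ty Γ → Act ty Δ
  | _, .inp x => .inp (ρ x)
  | _, .bout x => .bout (ρ x)
  | _, .out x y => .out (ρ x) (ρ y)
  | _, .tau => .tau

/-- The residual `ρ/a` of a renaming `ρ` after an action of kind `ty`:
`suc ρ` if the action is bound and `ρ` itself otherwise. -/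
def resRen : (ty : ActTy) → {Γ Δ : ℕ} → (Name Γ → Name Δ) → Name (ty.tgt Γ) → Name (ty.tgt Δ)
  | .bound, _, _, ρ => sucR ρ
  | .nonbound, _, _, ρ => ρ
attribute [reducible] ActTy.tgt
/-- The labelled transition relation, in proof-relevant form: an element of
`Tr P a R` is a derivation (a "proved transition") of `P ⟶a R`. -/
inductive Tr : {Γ : ℕ} → {ty : ActTy} → Proc Γ → Act ty Γ → Proc (ActTy.tgt ty Γ) → Type where
  /-- `x.P  ⟶x  P`. -/
  | inp : {Γ : ℕ} → (x : Name Γ) → (P : Proc (Γ + 1)) →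
      Tr (.input x P) (.inp x) P
  /-- `x⟨y⟩.P  ⟶x⟨y⟩  P`. -/
  | out : {Γ : ℕ} → (x y : Name Γ) → (P : Proc Γ) →
      Tr (.output x y P) (.out x y) P
  /-- Choose the left branch. -/
  | sumL : {Γ : ℕ} → {ty : ActTy} → {P : Proc Γ} → (Q : Proc Γ) → {a : Act ty Γ} →
      {R : Proc (ActTy.tgt ty Γ)} → Tr P a R → Tr (.choice P Q) a R
  /-- Choose the right branch. -/
  | sumR : {Γ : ℕ} → {ty : ActTy} → (P : Proc Γ) → {Q : Proc Γ} → {a : Act ty Γ} →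
      {R : Proc (ActTy.tgt ty Γ)} → Tr Q a R → Tr (.choice P Q) a R
  /-- Propagate a non-bound action through a parallel composition on the left. -/
  | parLC : {Γ : ℕ} → {P : Proc Γ} → (Q : Proc Γ) → {c : Act .nonbound Γ} → {R : Proc Γ} →
      Tr P c R → Tr (.par P Q) c (.par R Q)
  /-- Propagate a bound action through a parallel composition on the left,
  reserving the fresh name `0` in the passive component via `push`. -/
  | parLB : {Γ : ℕ} → {P : Proc Γ} → (Q : Proc Γ) → {b : Act .bound Γ} → {R : Proc (Γ + 1)} →
      Tr P b R → Tr (.par P Q) b (.par R (Q.rename push))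
  /-- Propagate a non-bound action through a parallel composition on the right. -/
  | parRC : {Γ : ℕ} → (P : Proc Γ) → {Q : Proc Γ} → {c : Act .nonbound Γ} → {S : Proc Γ} →
      Tr Q c S → Tr (.par P Q) c (.par P S)
  /-- Propagate a bound action through a parallel composition on the right. -/
  | parRB : {Γ : ℕ} → (P : Proc Γ) → {Q : Proc Γ} → {b : Act .bound Γ} → {S : Proc (Γ + 1)} →
      Tr Q b S → Tr (.par P Q) b (.par (P.rename push) S)
  /-- Communication rendezvous, receiving `y` on the left. -/
  | comL : {Γ : ℕ} → {P Q : Proc Γ} → {x y : Name Γ} → {R : Proc (Γ + 1)} → {S : Proc Γ} →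
      Tr P (.inp x) R → Tr Q (.out x y) S →
      Tr (.par P Q) .tau (.par (R.rename (pop y)) S)
  /-- Communication rendezvous, receiving `y` on the right. -/
  | comR : {Γ : ℕ} → {P Q : Proc Γ} → {x y : Name Γ} → {R : Proc Γ} → {S : Proc (Γ + 1)} →
      Tr P (.out x y) R → Tr Q (.inp x) S →
      Tr (.par P Q) .tau (.par R (S.rename (pop y)))
  /-- Initiate extrusion of the scope of a `ν`-binder: an output `(x+1)⟨0⟩` under the
  binder becomes a bound output `x⟨ν⟩`. -/
  | extrude : {Γ : ℕ} → {P : Proc (Γ + 1)} → {x : Name Γ} → {R : Proc (Γ + 1)} →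
      Tr P (.out (push x) 0) R → Tr (.nu P) (.bout x) R
  /-- Extrusion rendezvous ("close"), receiving the extruded name `0` on the left. -/
  | closeL : {Γ : ℕ} → {P Q : Proc Γ} → {x : Name Γ} → {R S : Proc (Γ + 1)} →
      Tr P (.inp x) R → Tr Q (.bout x) S →
      Tr (.par P Q) .tau (.nu (.par R S))
  /-- Extrusion rendezvous ("close"), receiving the extruded name `0` on the right. -/
  | closeR : {Γ : ℕ} → {P Q : Proc Γ} → {x : Name Γ} → {R S : Proc (Γ + 1)} →
      Tr P (.bout x) R → Tr Q (.inp x) S →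
      Tr (.par P Q) .tau (.nu (.par R S))
  /-- Propagate a non-bound action of the form `push* c` through a `ν`-binder. -/
  | nuC : {Γ : ℕ} → {P : Proc (Γ + 1)} → {c : Act .nonbound Γ} → {R : Proc (Γ + 1)} →
      Tr P (c.rename push) R → Tr (.nu P) c (.nu R)
  /-- Propagate a bound action of the form `push* b` through a `ν`-binder,
  rewiring the target with the braid `swap`. -/
  | nuB : {Γ : ℕ} → {P : Proc (Γ + 1)} → {b : Act .bound Γ} → {R : Proc (Γ + 2)} →
      Tr P (b.rename push) R → Tr (.nu P) b (.nu (R.rename swap))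
  /-- Replication. -/
  | rep : {Γ : ℕ} → {ty : ActTy} → {P : Proc Γ} → {a : Act ty Γ} → {R : Proc (ActTy.tgt ty Γ)} →
      Tr (.par P (.rep P)) a R → Tr (.rep P) a R

theorem sucR_comp {Γ Δ Θ : ℕ} (ρ : Name Γ → Name Δ) (σ : Name Δ → Name Θ) :
    sucR σ ∘ sucR ρ = sucR (σ ∘ ρ) := by
  funext ⟨x, _⟩
  cases x <;> rfl

theorem Proc.rename_rename {Γ Δ Θ : ℕ} (ρ : Name Γ → Name Δ) (σ : Name Δ → Name Θ)
    (P : Proc Γ) : (P.rename ρ).rename σ = P.rename (σ ∘ ρ) := by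
  induction P generalizing Δ Θ <;> simp only [Proc.rename, sucR_comp, Function.comp_apply, *]

theorem Proc.rename_rename_comm {Γ Δ Δ' Θ : ℕ} {ρ : Name Γ → Name Δ} {σ : Name Δ → Name Θ}
    {σ' : Name Γ → Name Δ'} {ρ' : Name Δ' → Name Θ} (h : σ ∘ ρ = ρ' ∘ σ') (P : Proc Γ) :
    (P.rename ρ).rename σ = (P.rename σ').rename ρ' := by
  rw [Proc.rename_rename, Proc.rename_rename, h]

theorem sucR_comp_push {Γ Δ : ℕ} (ρ : Name Γ → Name Δ) : sucR ρ ∘ push = push ∘ ρ := rfl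

theorem pop_comp_sucR {Γ Δ : ℕ} (ρ : Name Γ → Name Δ) (y : Name Γ) :
    pop (ρ y) ∘ sucR ρ = ρ ∘ pop y := by
  funext ⟨x, _⟩
  cases x <;> rfl

theorem swap_comp_sucR_sucR {Γ Δ : ℕ} (ρ : Name Γ → Name Δ) :
    swap ∘ sucR (sucR ρ) = sucR (sucR ρ) ∘ swap := by
  funext ⟨x, _⟩
  rcases x with _ | _ | x <;> rfl

theorem Act.rename_push_sucR {Γ Δ : ℕ} (ρ : Name Γ → Name Δ) {ty : ActTy} (a : Act ty Γ) :
    (a.rename push).rename (sucR ρ) = (a.rename ρ).rename push := by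
  cases a <;> rfl

def Tr.castTarget {Γ : ℕ} {ty : ActTy} {P : Proc Γ} {a : Act ty Γ} {R R' : Proc (ty.tgt Γ)}
    (h : R = R') (E : Tr P a R) : Tr P a R' :=
  h ▸ E

/-- The paper's `E/ρ`. -/
def Tr.rename {Γ : ℕ} {ty : ActTy} {P : Proc Γ} {a : Act ty Γ} {Q : Proc (ty.tgt Γ)} :
    Tr P a Q → {Δ : ℕ} → (ρ : Name Γ → Name Δ) →
      Tr (P.rename ρ) (a.rename ρ) (Q.rename (resRen ty ρ))
  | .inp x P, _, ρ => .inp (ρ x) (P.rename (sucR ρ))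
  | .out x y P, _, ρ => .out (ρ x) (ρ y) (P.rename ρ)
  | .sumL Q E, _, ρ => .sumL (Q.rename ρ) (E.rename ρ)
  | .sumR P E, _, ρ => .sumR (P.rename ρ) (E.rename ρ)
  | .parLC Q E, _, ρ => .parLC (Q.rename ρ) (E.rename ρ)
  | .parLB Q E, _, ρ =>
      Tr.castTarget (congrArg (Proc.par _) (Proc.rename_rename_comm (sucR_comp_push ρ) Q).symm)
        (.parLB (Q.rename ρ) (E.rename ρ))
  | .parRC P E, _, ρ => .parRC (P.rename ρ) (E.rename ρ)
  | .parRB P E, _, ρ =>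
      Tr.castTarget (congrArg (Proc.par · _) (Proc.rename_rename_comm (sucR_comp_push ρ) P).symm)
        (.parRB (P.rename ρ) (E.rename ρ))
  | .comL (y := y) (R := R) E F, _, ρ =>
      Tr.castTarget (congrArg (Proc.par · _) (Proc.rename_rename_comm (pop_comp_sucR ρ y) R))
        (.comL (E.rename ρ) (F.rename ρ))
  | .comR (y := y) (S := S) E F, _, ρ =>
      Tr.castTarget (congrArg (Proc.par _) (Proc.rename_rename_comm (pop_comp_sucR ρ y) S))
        (.comR (E.rename ρ) (F.rename ρ))
  -- `sucR ρ (push x) = push (ρ x)` and `sucR ρ 0 = 0` hold definitionally.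
  | .extrude E, _, ρ => .extrude (E.rename (sucR ρ))
  | .closeL E F, _, ρ => .closeL (E.rename ρ) (F.rename ρ)
  | .closeR E F, _, ρ => .closeR (E.rename ρ) (F.rename ρ)
  | .nuC E, _, ρ => .nuC (Act.rename_push_sucR ρ _ ▸ E.rename (sucR ρ))
  | .nuB (R := R) E, _, ρ =>
      Tr.castTarget (congrArg Proc.nu (Proc.rename_rename_comm (swap_comp_sucR_sucR ρ) R))
        (.nuB (Act.rename_push_sucR ρ _ ▸ E.rename (sucR ρ)))
  | .rep E, _, ρ => .rep (E.rename ρ)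

/-- Transitions are stable under renaming: if `E : P ⟶a Q` and `ρ : Fin Γ → Fin Δ`,
then there is a transition `E/ρ : ρ* P ⟶(ρ* a) (ρ/a)* Q`. -/
theorem Tr.rename_stable {Γ Δ : ℕ} {ty : ActTy} {P : Proc Γ} {a : Act ty Γ}
    {Q : Proc (ActTy.tgt ty Γ)} (ρ : Name Γ → Name Δ) (E : Tr P a Q) :
    Nonempty (Tr (P.rename ρ) (a.rename ρ) (Q.rename (resRen ty ρ))) :=
  ⟨E.rename ρ⟩
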